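/- (Pure-model Lagrange system.) Fix positive integers a₁, …, a_r with r ≥ 2 and Σ_s a_s ≥ 3, and weights λ_s > 0 summing to 1. There exists a unique L > 0 such that the values b_s = (1 − √(a_s/(a_s + L λ_s)))/2 satisfy Σ_s a_s b_s = 1; and with this L, the maximum of Σ_s √(λ_s a_s b_s (1 − b_s)) over b ∈ [0, 1/2]^r with Σ_s a_s b_s = 1 is attained at these b_s and equals (1/2) Σ_s λ_s √(L a_s / (a_s + L λ_s)). -/
import Mathlib


open scoped BigOperators
open Filter

/-- The exponents `b_s = (1 − √(a_s/(a_s + L λ_s)))/2` of the pure-model maximizer. -/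
noncomputable def pureExponent (a : ℕ) (lam L : ℝ) : ℝ :=
  (1 - Real.sqrt ((a : ℝ) / ((a : ℝ) + L * lam))) / 2

/-- Termwise equality at the optimum. -/
lemma aux_eq (a lam L : ℝ) (ha : 0 < a) (hl : 0 < lam) (hL : 0 < L) :
    Real.sqrt (lam * a * ((1 - Real.sqrt (a/(a+L*lam)))/2)
        * (1 - (1 - Real.sqrt (a/(a+L*lam)))/2))
      = lam/2 * Real.sqrt (L*a/(a+L*lam)) := by
  have hD : 0 < a + L*lam := by positivity
  set u := Real.sqrt (a/(a+L*lam)) with hu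
  have hu2 : u^2 = a/(a+L*lam) := Real.sq_sqrt (by positivity)
  set s := Real.sqrt L with hs
  have hs2 : s^2 = L := Real.sq_sqrt hL.le
  have hs0 : 0 < s := Real.sqrt_pos.mpr hL
  have hu0 : 0 < u := Real.sqrt_pos.mpr (by positivity)
  have hLaD : Real.sqrt (L*a/(a+L*lam)) = s * u := by
    rw [mul_div_assoc, Real.sqrt_mul hL.le]
  have hid : lam * (s^2*u^2) = a*(1-u^2) := by
    rw [hs2, hu2]; field_simp; ring
  have key : lam * a * ((1-u)/2) * (1 - (1-u)/2) = (lam/2*(s*u))^2 := by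
    nlinarith [hid]
  rw [key, hLaD, Real.sqrt_sq (by positivity)]

/-- Pointwise tangent-line inequality. -/
lemma aux_le (a lam L b : ℝ) (ha : 0 < a) (hl : 0 < lam) (hL : 0 < L)
    (hb0 : 0 ≤ b) (hb2 : b ≤ 1/2) :
    Real.sqrt (lam * a * b * (1-b)) ≤
      lam/2 * Real.sqrt (L*a/(a+L*lam))
        + (a / Real.sqrt L) * (b - (1 - Real.sqrt (a/(a+L*lam)))/2) := by
  have hD : 0 < a + L*lam := by positivity
  set u := Real.sqrt (a/(a+L*lam)) with hu
  have hu2 : u^2 = a/(a+L*lam) := Real.sq_sqrt (by positivity)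
  set s := Real.sqrt L with hs
  have hs2 : s^2 = L := Real.sq_sqrt hL.le
  have hs0 : 0 < s := Real.sqrt_pos.mpr hL
  have hu0 : 0 < u := Real.sqrt_pos.mpr (by positivity)
  have hLaD : Real.sqrt (L*a/(a+L*lam)) = s * u := by
    rw [mul_div_assoc, Real.sqrt_mul hL.le]
  have hid : lam * (s^2*u^2) = a*(1-u^2) := by
    rw [hs2, hu2]; field_simp; ring
  set m : ℝ := lam*s*u/2 with hm
  have hm0 : 0 < m := by positivity
  set x' : ℝ := m^2 + lam*a*u*(b - (1-u)/2) with hx'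
  have hm2 : m^2 = lam*a*((1-u)/2)*(1-(1-u)/2) := by
    rw [hm]; linear_combination (lam/4)*hid
  have hxx' : lam * a * b * (1-b) ≤ x' := by
    have h1 : 0 ≤ lam*a*(b - (1-u)/2)^2 := by positivity
    rw [hx', hm2]; nlinarith [h1]
  have hx0 : (0:ℝ) ≤ lam * a * b * (1-b) := by
    have : (0:ℝ) ≤ 1 - b := by linarith
    positivity
  have hx'0 : 0 ≤ x' := le_trans hx0 hxx'
  have h1 : Real.sqrt (lam * a * b * (1-b)) ≤ Real.sqrt x' :=
    Real.sqrt_le_sqrt hxx'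
  have h2 : Real.sqrt x' ≤ (x' + m^2)/(2*m) := by
    rw [le_div_iff₀ (by positivity)]
    nlinarith [sq_nonneg (Real.sqrt x' - m), Real.sq_sqrt hx'0,
      Real.sqrt_nonneg x']
  have h3 : (x' + m^2)/(2*m) = lam/2*(s*u) + (a/s)*(b - (1-u)/2) := by
    rw [hx', hm]
    field_simp
    ring
  rw [hLaD]
  calc Real.sqrt (lam * a * b * (1-b)) ≤ (x' + m^2)/(2*m) := h1.trans h2
    _ = _ := by rw [h3]

/-- Pure-model Lagrange system: for positive integers `a_s` with `r ≥ 2` and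
`Σ_s a_s ≥ 3` and positive weights `λ_s` summing to `1`, there is a unique `L > 0` such
that `b_s := (1 − √(a_s/(a_s + L λ_s)))/2` satisfy `Σ_s a_s b_s = 1`; with this `L`,
the quantity `Σ_s √(λ_s a_s b_s (1 − b_s))` equals
`(1/2) Σ_s λ_s √(L a_s/(a_s + L λ_s))`, and this is the maximum of
`Σ_s √(λ_s a_s b_s (1 − b_s))` over `b ∈ [0, 1/2]^r` with `Σ_s a_s b_s = 1`. -/
theorem stmt_15 (r : ℕ) (hr : 2 ≤ r) (a : Fin r → ℕ) (ha : ∀ s, 0 < a s)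
    (hA : 3 ≤ ∑ s, a s)
    (lam : Fin r → ℝ) (hlam : ∀ s, 0 < lam s) (hlam1 : ∑ s, lam s = 1) :
    ∃ L : ℝ, 0 < L ∧
      (∑ s, (a s : ℝ) * pureExponent (a s) (lam s) L = 1) ∧
      (∀ L' : ℝ, 0 < L' →
        (∑ s, (a s : ℝ) * pureExponent (a s) (lam s) L' = 1) → L' = L) ∧
      (∑ s, Real.sqrt (lam s * (a s : ℝ) * pureExponent (a s) (lam s) L
            * (1 - pureExponent (a s) (lam s) L))
        = (1 / 2) * ∑ s, lam s * Real.sqrt (L * (a s : ℝ) / ((a s : ℝ) + L * lam s))) ∧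
      (∀ b : Fin r → ℝ, (∀ s, b s ∈ Set.Icc (0 : ℝ) (1 / 2)) →
        (∑ s, (a s : ℝ) * b s = 1) →
        ∑ s, Real.sqrt (lam s * (a s : ℝ) * b s * (1 - b s))
          ≤ (1 / 2) * ∑ s, lam s * Real.sqrt (L * (a s : ℝ) / ((a s : ℝ) + L * lam s))) := by
  have har : ∀ s, (0:ℝ) < (a s : ℝ) := fun s => by exact_mod_cast ha s
  have hne : Nonempty (Fin r) := ⟨⟨0, by omega⟩⟩
  set F : ℝ → ℝ := fun L => ∑ s, (a s : ℝ) * pureExponent (a s) (lam s) L with hF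
  have hDpos : ∀ (s : Fin r) (L : ℝ), 0 ≤ L → 0 < (a s : ℝ) + L * lam s := fun s L hL =>
    add_pos_of_pos_of_nonneg (har s) (mul_nonneg hL (hlam s).le)
  have hF0 : F 0 = 0 := Finset.sum_eq_zero fun s _ => by
    simp [pureExponent, (har s).ne']
  have hcont : ContinuousOn F (Set.Ici (0:ℝ)) := by
    apply continuousOn_finset_sum
    intro s _
    simp only [pureExponent]
    apply ContinuousOn.mul continuousOn_const
    apply ContinuousOn.div_const
    apply ContinuousOn.sub continuousOn_const
    apply ContinuousOn.sqrt
    apply ContinuousOn.div continuousOn_const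
      ((continuous_const.add (continuous_id.mul continuous_const)).continuousOn)
    intro x hx
    exact ne_of_gt (hDpos s x hx)
  have hmono : StrictMonoOn F (Set.Ici (0:ℝ)) := by
    intro x hx y hy hxy
    apply Finset.sum_lt_sum_of_nonempty Finset.univ_nonempty
    intro s _
    have hbx : pureExponent (a s) (lam s) x < pureExponent (a s) (lam s) y := by
      simp only [pureExponent]
      have hlt : (a s:ℝ) + x * lam s < (a s:ℝ) + y * lam s := by
        have := mul_lt_mul_of_pos_right hxy (hlam s); linarith
      have h1 : (a s:ℝ)/((a s:ℝ)+y*lam s) < (a s:ℝ)/((a s:ℝ)+x*lam s) :=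
        div_lt_div_of_pos_left (har s) (hDpos s x hx) hlt
      have h2 := Real.sqrt_lt_sqrt (div_nonneg (har s).le (hDpos s y hy).le) h1
      linarith
    exact mul_lt_mul_of_pos_left hbx (har s)
  have hlim : Tendsto F atTop (nhds (∑ s, (a s:ℝ)/2)) := by
    apply tendsto_finset_sum
    intro s _
    have hd : Tendsto (fun L:ℝ => (a s:ℝ) + L * lam s) atTop atTop :=
      tendsto_atTop_add_const_left _ _ (Tendsto.atTop_mul_const (hlam s) tendsto_id)
    have h0 : Tendsto (fun L:ℝ => (a s:ℝ)/((a s:ℝ)+L*lam s)) atTop (nhds 0) :=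
      Tendsto.div_atTop tendsto_const_nhds hd
    have hsq : Tendsto (fun L:ℝ => Real.sqrt ((a s:ℝ)/((a s:ℝ)+L*lam s))) atTop (nhds 0) :=
      Real.sqrt_zero ▸ h0.sqrt
    have hfin : Tendsto (fun L:ℝ => (a s:ℝ) * pureExponent (a s) (lam s) L) atTop
        (nhds ((a s:ℝ)*((1-0)/2))) := by
      simp only [pureExponent]
      exact Tendsto.const_mul _ ((tendsto_const_nhds.sub hsq).div_const 2)
    convert hfin using 2
    ring
  have hgt : (1:ℝ) < ∑ s, (a s:ℝ)/2 := by
    have h3 : (3:ℝ) ≤ ∑ s, (a s:ℝ) := by exact_mod_cast hA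
    rw [← Finset.sum_div]
    linarith
  obtain ⟨M, hM1, hM0⟩ : ∃ M:ℝ, 1 < F M ∧ 0 ≤ M := by
    have := (hlim.eventually (eventually_gt_nhds hgt)).and (eventually_ge_atTop (0:ℝ))
    exact this.exists
  obtain ⟨L, hLmem, hFL⟩ := intermediate_value_Icc hM0
    (hcont.mono Set.Icc_subset_Ici_self) (Set.mem_Icc.mpr ⟨le_of_eq_of_le hF0 zero_le_one, hM1.le⟩)
  have hL0 : (0:ℝ) ≤ L := hLmem.1
  have hLpos : 0 < L := by
    rcases eq_or_lt_of_le hL0 with h | h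
    · exfalso; rw [← h] at hFL; rw [hF0] at hFL; norm_num at hFL
    · exact h
  refine ⟨L, hLpos, hFL, ?_, ?_, ?_⟩
  · intro L' hL' hFL'
    exact hmono.injOn (Set.mem_Ici.mpr hL'.le) (Set.mem_Ici.mpr hL0) (hFL'.trans hFL.symm)
  · rw [Finset.mul_sum]
    refine Finset.sum_congr rfl fun s _ => ?_
    simp only [pureExponent]
    rw [aux_eq _ _ _ (har s) (hlam s) hLpos]
    ring
  · intro b hb hsum
    have hterm : ∀ s ∈ Finset.univ, Real.sqrt (lam s * (a s:ℝ) * b s * (1 - b s)) ≤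
        lam s/2 * Real.sqrt (L*(a s:ℝ)/((a s:ℝ)+L*lam s))
          + ((a s:ℝ)/Real.sqrt L)*(b s - pureExponent (a s) (lam s) L) := fun s _ => by
      have := aux_le (a s:ℝ) (lam s) L (b s) (har s) (hlam s) hLpos (hb s).1 (hb s).2
      simpa [pureExponent] using this
    have hz : ∑ s, ((a s:ℝ)/Real.sqrt L)*(b s - pureExponent (a s) (lam s) L) = 0 := by
      have he : ∀ s:Fin r, ((a s:ℝ)/Real.sqrt L)*(b s - pureExponent (a s) (lam s) L)
          = ((a s:ℝ)*b s - (a s:ℝ)*pureExponent (a s) (lam s) L)/Real.sqrt L := fun s => by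
        ring
      simp only [he]
      have hFL' : ∑ s, (a s:ℝ) * pureExponent (a s) (lam s) L = 1 := hFL
      rw [← Finset.sum_div, Finset.sum_sub_distrib, hsum, hFL', sub_self, zero_div]
    calc ∑ s, Real.sqrt (lam s * (a s:ℝ) * b s * (1 - b s))
        ≤ ∑ s, (lam s/2 * Real.sqrt (L*(a s:ℝ)/((a s:ℝ)+L*lam s))
            + ((a s:ℝ)/Real.sqrt L)*(b s - pureExponent (a s) (lam s) L)) :=
          Finset.sum_le_sum hterm
      _ = ∑ s, lam s/2 * Real.sqrt (L*(a s:ℝ)/((a s:ℝ)+L*lam s)) := by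
          rw [Finset.sum_add_distrib, hz, add_zero]
      _ = (1/2) * ∑ s, lam s * Real.sqrt (L*(a s:ℝ)/((a s:ℝ)+L*lam s)) := by
          rw [Finset.mul_sum]
          exact Finset.sum_congr rfl fun s _ => by ring
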